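/- arXiv:2004.04321 — 4 statements merged into one kernel-verified Lean document; each statement's English description precedes it below -/
import Mathlib

section
/- Let E be a smooth, strictly convex, reflexive Banach space, C a nonempty closed convex subset of E, and T : C → E a firmly nonexpansive-like mapping (i.e., ⟨Tx − Ty, J_E^p(x−Tx) − J_E^p(y−Ty)⟩ ≥ 0 for all x,y ∈ C, where J_E^p is the duality mapping). Then the fixed point set F(T) is closed in E. -/
/-- Let E be a smooth, strictly convex, reflexive Banach space (modeled by an
abstract single-valued duality mapping `J : E → E →L[ℝ] ℝ` satisfying `J x x = ‖x‖^p` and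
`‖J x‖ = ‖x‖^(p-1)`), `C` a nonempty closed convex subset of `E`, and `T : E → E` a firmly
nonexpansive-like mapping on `C`. Then the fixed point set `F(T) = {x ∈ C | T x = x}` is closed. -/
theorem fixedPointSet_isClosed_of_firmlyNonexpansiveLike
    {E : Type*} [NormedAddCommGroup E] [NormedSpace ℝ E]
    (p : ℝ) (hp : 1 < p)
    (J : E → E →L[ℝ] ℝ)
    (hJ1 : ∀ x : E, J x x = ‖x‖ ^ p)
    (hJ2 : ∀ x : E, ‖J x‖ = ‖x‖ ^ (p - 1))
    (C : Set E) (hCne : C.Nonempty) (hCcl : IsClosed C) (hCcv : Convex ℝ C)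
    (T : E → E) (hTmem : ∀ x ∈ C, T x ∈ Set.univ)
    (hT : ∀ x ∈ C, ∀ y ∈ C,
      0 ≤ (J (x - T x) - J (y - T y)) (T x - T y)) :
    IsClosed {x ∈ C | T x = x} := by
  -- J 0 = 0
  have hJ0 : J 0 = 0 := by
    have h : ‖J (0 : E)‖ = 0 := by
      rw [hJ2]
      rw [norm_zero, Real.zero_rpow (by linarith)]
    simpa [norm_eq_zero] using h
  -- key inequality: ‖x - T x‖ ≤ ‖x - y‖ for fixed points y
  have key : ∀ x ∈ C, ∀ y ∈ C, T y = y → ‖x - T x‖ ≤ ‖x - y‖ := by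
    intro x hx y hy hTy
    have h1 : 0 ≤ (J (x - T x)) (T x - y) := by
      have := hT x hx y hy
      rw [hTy] at this
      simpa [sub_self, hJ0] using this
    have h2 : ‖x - T x‖ ^ p ≤ (J (x - T x)) (x - y) := by
      have : (J (x - T x)) (x - y) = (J (x - T x)) (x - T x) + (J (x - T x)) (T x - y) := by
        rw [← map_add]; congr 1; abel
      rw [this, hJ1]
      linarith
    have h3 : (J (x - T x)) (x - y) ≤ ‖x - T x‖ ^ (p - 1) * ‖x - y‖ := by
      calc (J (x - T x)) (x - y) ≤ ‖(J (x - T x)) (x - y)‖ := le_abs_self _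
        _ ≤ ‖J (x - T x)‖ * ‖x - y‖ := (J (x - T x)).le_opNorm _
        _ = ‖x - T x‖ ^ (p - 1) * ‖x - y‖ := by rw [hJ2]
    set a := ‖x - T x‖ with ha
    rcases eq_or_lt_of_le (norm_nonneg (x - T x)) with h0 | h0
    · rw [ha, ← h0]; exact norm_nonneg _
    · rw [← ha] at h0
      have hap : a ^ p = a ^ (p - 1) * a := by
        rw [Real.rpow_sub h0, Real.rpow_one, div_mul_cancel₀ _ (ne_of_gt h0)]
      have h4 : a ^ (p - 1) * a ≤ a ^ (p - 1) * ‖x - y‖ := by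
        rw [← hap]; linarith
      have hpos : 0 < a ^ (p - 1) := Real.rpow_pos_of_pos h0 _
      exact le_of_mul_le_mul_left h4 hpos
  -- closedness
  refine isClosed_of_closure_subset ?_
  intro x hx
  have hxC : x ∈ C := by
    have : closure {x ∈ C | T x = x} ⊆ closure C := closure_mono (fun z hz => hz.1)
    exact hCcl.closure_subset (this hx)
  have hnorm : ‖x - T x‖ = 0 := by
    by_contra h
    have hpos : 0 < ‖x - T x‖ := lt_of_le_of_ne (norm_nonneg _) (Ne.symm h)
    obtain ⟨y, hy, hdy⟩ := Metric.mem_closure_iff.mp hx _ hpos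
    have := key x hxC y hy.1 hy.2
    rw [dist_eq_norm] at hdy
    linarith
  refine ⟨hxC, ?_⟩
  have := norm_eq_zero.mp hnorm
  have := sub_eq_zero.mp this
  exact this.symm
end

section
/- Let H be a real Hilbert space, C ⊂ H closed convex nonempty, F : C × C → ℝ a bifunction satisfying (A1)–(A4), and r > 0. Define T_r^F(x) = {z ∈ C : F(z,y) + (1/r)⟨y − z, z − x⟩ ≥ 0 for all y ∈ C}, and assume T_r^F(x) is nonempty for each x ∈ H. Then T_r^F is single-valued and satisfies ‖T_r^F x − T_r^F y‖² ≤ ⟨T_r^F x − T_r^F y, x − y⟩ for all x, y ∈ H. -/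
open RealInnerProductSpace Filter

/-- The resolvent T_r^F of a bifunction satisfying (A1)–(A4) is single-valued and
firmly nonexpansive. -/
theorem equilibrium_resolvent_firmlyNonexpansive
    {H : Type*} [NormedAddCommGroup H] [InnerProductSpace ℝ H] [CompleteSpace H]
    (C : Set H) (hCne : C.Nonempty) (hCcl : IsClosed C) (hCcv : Convex ℝ C)
    (F : H → H → ℝ)
    (hA1 : ∀ x ∈ C, F x x = 0)
    (hA2 : ∀ x ∈ C, ∀ y ∈ C, F x y + F y x ≤ 0)
    (hA3 : ∀ x ∈ C, ∀ y ∈ C, ∀ z ∈ C,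
      limsup (fun t : ℝ => F (t • z + (1 - t) • x) y) (nhdsWithin 0 (Set.Ioi 0)) ≤ F x y)
    (hA4 : ∀ x ∈ C, ConvexOn ℝ C (F x) ∧ LowerSemicontinuousOn (F x) C)
    (r : ℝ) (hr : 0 < r)
    (Tr : H → H)
    (hTr : ∀ x : H, Tr x ∈ C ∧ ∀ y ∈ C, F (Tr x) y + (1 / r) * ⟪y - Tr x, Tr x - x⟫ ≥ 0) :
    (∀ x : H, ∀ z : H, (z ∈ C ∧ ∀ y ∈ C, F z y + (1 / r) * ⟪y - z, z - x⟫ ≥ 0) → z = Tr x) ∧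
      ∀ x y : H, ‖Tr x - Tr y‖ ^ 2 ≤ ⟪Tr x - Tr y, x - y⟫ := by
  have key : ∀ x₁ x₂ z₁ z₂ : H, z₁ ∈ C → z₂ ∈ C →
      (∀ y ∈ C, F z₁ y + (1 / r) * ⟪y - z₁, z₁ - x₁⟫ ≥ 0) →
      (∀ y ∈ C, F z₂ y + (1 / r) * ⟪y - z₂, z₂ - x₂⟫ ≥ 0) →
      ‖z₁ - z₂‖ ^ 2 ≤ ⟪z₁ - z₂, x₁ - x₂⟫ := by
    intro x₁ x₂ z₁ z₂ hz₁ hz₂ h1 h2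
    have e1 := h1 z₂ hz₂
    have e2 := h2 z₁ hz₁
    have hmono := hA2 z₁ hz₁ z₂ hz₂
    have hinner : 0 ≤ ⟪z₂ - z₁, z₁ - x₁⟫ + ⟪z₁ - z₂, z₂ - x₂⟫ := by
      have hsum : 0 ≤ (1 / r) * (⟪z₂ - z₁, z₁ - x₁⟫ + ⟪z₁ - z₂, z₂ - x₂⟫) := by
        nlinarith
      have hrpos : (0:ℝ) < 1 / r := by positivity
      nlinarith
    have hexp : ⟪z₂ - z₁, z₁ - x₁⟫ + ⟪z₁ - z₂, z₂ - x₂⟫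
        = ⟪z₁ - z₂, x₁ - x₂⟫ - ‖z₁ - z₂‖ ^ 2 := by
      have h := real_inner_self_eq_norm_sq (z₁ - z₂)
      simp only [inner_sub_left, inner_sub_right] at h ⊢
      have c1 := real_inner_comm z₁ z₂
      linarith
    linarith
  constructor
  · intro x z ⟨hzC, hz⟩
    have h := key x x z (Tr x) hzC (hTr x).1 hz (hTr x).2
    have : ‖z - Tr x‖ ^ 2 ≤ 0 := by simpa using h
    have : ‖z - Tr x‖ = 0 := by nlinarith [norm_nonneg (z - Tr x)]
    have := norm_sub_eq_zero_iff.mp this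
    exact this
  · intro x y
    exact key x y (Tr x) (Tr y) (hTr x).1 (hTr y).1 (hTr x).2 (hTr y).2
end

section
/- Let H₁, H₂ be Hilbert spaces, A : H₁ → H₂ bounded linear with adjoint A*, S : H₂ → H₂ firmly nonexpansive, T : H₁ → H₁ quasi-nonexpansive with closed graph, and suppose Γ = {x* : Tx* = x*, S(Ax*) = Ax*} is nonempty. Let {γₙ} ⊂ (0, 2/‖A‖²), {αₙ} ⊂ [a,b] ⊂ (0,1), {θₙ} bounded, and define the shrinking projection sequence: wₙ = xₙ + θₙ(xₙ − xₙ₋₁), zₙ = wₙ − γₙ A*(I − S)A wₙ, yₙ = αₙ zₙ + (1−αₙ) T zₙ, C₁ = H₁, C_{n+1} = {u ∈ Cₙ : ‖yₙ − u‖ ≤ ‖zₙ − u‖ ≤ ‖wₙ − u‖}, x_{n+1} = P_{C_{n+1}} x₀. Then Γ ⊂ Cₙ for all n ≥ 1. -/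
open RealInnerProductSpace

/-- In the inertial shrinking projection algorithm for the split common fixed point
problem, the solution set Γ is contained in every Cₙ. -/
theorem solution_set_subset_shrinking_sets
    {H₁ H₂ : Type*} [NormedAddCommGroup H₁] [InnerProductSpace ℝ H₁] [CompleteSpace H₁]
    [NormedAddCommGroup H₂] [InnerProductSpace ℝ H₂] [CompleteSpace H₂]
    (A : H₁ →L[ℝ] H₂) (S : H₂ → H₂)
    (hS : ∀ x y : H₂, ⟪S x - S y, x - y⟫ ≥ ‖S x - S y‖ ^ 2)
    (T : H₁ → H₁)
    (hT : ∀ x : H₁, ∀ p : H₁, T p = p → ‖T x - p‖ ≤ ‖x - p‖)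
    (hTclosed : ∀ (u : ℕ → H₁) (a b : H₁), Filter.Tendsto u Filter.atTop (nhds a) →
      Filter.Tendsto (fun n => T (u n)) Filter.atTop (nhds b) → T a = b)
    (Γ : Set H₁) (hΓ : Γ = {p : H₁ | T p = p ∧ S (A p) = A p}) (hΓne : Γ.Nonempty)
    (γ α θ : ℕ → ℝ) (a b : ℝ) (ha : 0 < a) (hb : b < 1)
    (hγ : ∀ n, 0 < γ n ∧ γ n < 2 / ‖A‖ ^ 2)
    (hα : ∀ n, α n ∈ Set.Icc a b)
    (hθ : ∃ M : ℝ, ∀ n, |θ n| ≤ M)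
    (x₀ : H₁) (x w z y : ℕ → H₁) (C : ℕ → Set H₁)
    (hw : ∀ n ≥ 1, w n = x n + θ n • (x n - x (n - 1)))
    (hz : ∀ n ≥ 1, z n =
      w n - γ n • (ContinuousLinearMap.adjoint A) (A (w n) - S (A (w n))))
    (hy : ∀ n ≥ 1, y n = α n • z n + (1 - α n) • T (z n))
    (hC1 : C 1 = Set.univ)
    (hC : ∀ n ≥ 1, C (n + 1) =
      {u ∈ C n | ‖y n - u‖ ≤ ‖z n - u‖ ∧ ‖z n - u‖ ≤ ‖w n - u‖})
    (hx : ∀ n ≥ 1, x (n + 1) ∈ C (n + 1) ∧ ∀ u ∈ C (n + 1), ‖x₀ - x (n + 1)‖ ≤ ‖x₀ - u‖) :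
    ∀ n ≥ 1, Γ ⊆ C n := by

  have hAnorm : 0 < ‖A‖ := by
    rcases lt_or_ge 0 ‖A‖ with h | h
    · exact h
    · exfalso
      have hA0 : ‖A‖ = 0 := le_antisymm h (norm_nonneg _)
      have h1 := (hγ 0).1
      have h2 := (hγ 0).2
      rw [hA0] at h2
      norm_num at h2
      linarith
  have key : ∀ n ≥ 1, ∀ p ∈ Γ, ‖y n - p‖ ≤ ‖z n - p‖ ∧ ‖z n - p‖ ≤ ‖w n - p‖ := by
    intro n hn p hp
    rw [hΓ] at hp
    obtain ⟨hTp, hSp⟩ := hp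
    have hz2 : ‖z n - p‖ ≤ ‖w n - p‖ := by
      set v := A (w n) - S (A (w n)) with hv
      set u := (ContinuousLinearMap.adjoint A) v with hu
      have hzp : z n - p = (w n - p) - γ n • u := by
        rw [hz n hn]; abel
      have hinner : ⟪w n - p, u⟫ = ⟪A (w n) - A p, v⟫ := by
        rw [hu, real_inner_comm, ContinuousLinearMap.adjoint_inner_left, map_sub,
          real_inner_comm]
      have hfirm := hS (A (w n)) (A p)
      rw [hSp] at hfirm
      have hlow : ⟪w n - p, u⟫ ≥ ‖v‖ ^ 2 := by
        rw [hinner]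
        have hv' : v = (A (w n) - A p) - (S (A (w n)) - A p) := by rw [hv]; abel
        have e1 : ‖v‖ ^ 2 = ‖A (w n) - A p‖ ^ 2
            - 2 * ⟪A (w n) - A p, S (A (w n)) - A p⟫
            + ‖S (A (w n)) - A p‖ ^ 2 := by
          rw [hv', norm_sub_sq_real]
        have e2 : ⟪A (w n) - A p, v⟫
            = ‖A (w n) - A p‖ ^ 2 - ⟪A (w n) - A p, S (A (w n)) - A p⟫ := by
          rw [hv', inner_sub_right, real_inner_self_eq_norm_sq]
        rw [real_inner_comm] at hfirm
        rw [e2, e1]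
        linarith [hfirm]
      have hunorm : ‖u‖ ≤ ‖A‖ * ‖v‖ := by
        calc ‖u‖ ≤ ‖(ContinuousLinearMap.adjoint A)‖ * ‖v‖ :=
              (ContinuousLinearMap.adjoint A).le_opNorm v
          _ = ‖A‖ * ‖v‖ := by
              rw [LinearIsometryEquiv.norm_map ContinuousLinearMap.adjoint A]
      have hsq : ‖z n - p‖ ^ 2 ≤ ‖w n - p‖ ^ 2 := by
        rw [hzp, norm_sub_sq_real, real_inner_smul_right, norm_smul, Real.norm_eq_abs,
          abs_of_pos (hγ n).1]
        have hγA : γ n * ‖A‖ ^ 2 < 2 := by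
          have := (hγ n).2
          rw [div_eq_mul_inv] at this
          calc γ n * ‖A‖ ^ 2 < (2 / ‖A‖ ^ 2) * ‖A‖ ^ 2 := by
                apply mul_lt_mul_of_pos_right this (by positivity)
            _ = 2 := by field_simp
        have husq : ‖u‖ ^ 2 ≤ ‖A‖ ^ 2 * ‖v‖ ^ 2 := by
          nlinarith [norm_nonneg u, norm_nonneg v, mul_nonneg (norm_nonneg A) (norm_nonneg v)]
        have h1 : γ n ^ 2 * ‖u‖ ^ 2 ≤ γ n ^ 2 * (‖A‖ ^ 2 * ‖v‖ ^ 2) :=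
          mul_le_mul_of_nonneg_left husq (sq_nonneg _)
        have h2 : γ n * ‖A‖ ^ 2 * ‖v‖ ^ 2 ≤ 2 * ‖v‖ ^ 2 :=
          mul_le_mul_of_nonneg_right hγA.le (sq_nonneg _)
        have h2' : γ n * (γ n * ‖A‖ ^ 2 * ‖v‖ ^ 2) ≤ γ n * (2 * ‖v‖ ^ 2) :=
          mul_le_mul_of_nonneg_left h2 (hγ n).1.le
        have h3 : 2 * γ n * ‖v‖ ^ 2 ≤ 2 * γ n * ⟪w n - p, u⟫ := by
          nlinarith [(hγ n).1]
        nlinarith [h1, h2', h3]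
      nlinarith [norm_nonneg (z n - p), norm_nonneg (w n - p)]
    refine ⟨?_, hz2⟩
    rw [hy n hn]
    have hsplit : α n • z n + (1 - α n) • T (z n) - p
        = α n • (z n - p) + (1 - α n) • (T (z n) - p) := by
      rw [smul_sub, smul_sub, sub_smul, sub_smul, one_smul, one_smul]
      abel
    rw [hsplit]
    have hα1 := (hα n).1
    have hα2 := (hα n).2
    calc ‖α n • (z n - p) + (1 - α n) • (T (z n) - p)‖
        ≤ ‖α n • (z n - p)‖ + ‖(1 - α n) • (T (z n) - p)‖ := norm_add_le _ _
      _ = α n * ‖z n - p‖ + (1 - α n) * ‖T (z n) - p‖ := by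
          rw [norm_smul, norm_smul, Real.norm_eq_abs, Real.norm_eq_abs,
            abs_of_pos (by linarith), abs_of_pos (by linarith)]
      _ ≤ α n * ‖z n - p‖ + (1 - α n) * ‖z n - p‖ := by
          have := hT (z n) p hTp
          nlinarith
      _ = ‖z n - p‖ := by ring
  intro n hn
  induction n with
  | zero => omega
  | succ m ih =>
    rcases Nat.lt_or_ge m 1 with hm | hm
    · interval_cases m
      rw [hC1]; exact Set.subset_univ _
    · intro p hp
      rw [hC m hm]
      exact ⟨ih hm hp, (key m hm p hp).1, (key m hm p hp).2⟩
end

section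
/- Under the hypotheses of the previous statement (Γ nonempty, the shrinking projection algorithm with inertial term well defined), the sequence {xₙ} is Cauchy and converges strongly to the point z = P_Γ x₀, which satisfies Tz = z and S(Az) = Az. -/
open RealInnerProductSpace
open Filter Topology

section Aux
variable {H : Type*} [NormedAddCommGroup H] [InnerProductSpace ℝ H]

omit [InnerProductSpace ℝ H] in
private lemma sq_le_iff_norm' {x y : H} : ‖x‖ ≤ ‖y‖ ↔ ‖x‖^2 ≤ ‖y‖^2 := by
  rw [pow_le_pow_iff_left₀ (norm_nonneg _) (norm_nonneg _) two_ne_zero]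

private lemma halfspace_spec' (p q : H) :
    Convex ℝ {u : H | ‖p - u‖ ≤ ‖q - u‖} ∧ IsClosed {u : H | ‖p - u‖ ≤ ‖q - u‖} := by
  have hset : {u : H | ‖p - u‖ ≤ ‖q - u‖}
      = {u : H | ⟪q - p, u⟫ ≤ (‖q‖^2 - ‖p‖^2)/2} := by
    ext u
    simp only [Set.mem_setOf_eq]
    rw [sq_le_iff_norm', @norm_sub_sq_real H, @norm_sub_sq_real H, inner_sub_left]
    constructor <;> intro h <;> linarith
  rw [hset]
  constructor
  · exact convex_halfSpace_le (innerSL ℝ (q - p)).toLinearMap.isLinear _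
  · exact isClosed_le (innerSL ℝ (q - p)).continuous continuous_const

private lemma proj_char' {K : Set H} (hK : Convex ℝ K) {x₀ v : H} (hv : v ∈ K)
    (hmin : ∀ u ∈ K, ‖x₀ - v‖ ≤ ‖x₀ - u‖) : ∀ u ∈ K, ⟪x₀ - v, u - v⟫ ≤ 0 := by
  rw [← norm_eq_iInf_iff_real_inner_le_zero hK hv]
  haveI : Nonempty K := ⟨⟨v, hv⟩⟩
  refine le_antisymm (le_ciInf fun w => hmin w w.2) ?_
  refine ciInf_le ⟨0, ?_⟩ (⟨v, hv⟩ : K)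
  rintro r ⟨w, rfl⟩
  exact norm_nonneg _

end Aux

private lemma key_sq' {H₁ H₂ : Type*}
    [NormedAddCommGroup H₁] [InnerProductSpace ℝ H₁] [CompleteSpace H₁]
    [NormedAddCommGroup H₂] [InnerProductSpace ℝ H₂] [CompleteSpace H₂]
    (A : H₁ →L[ℝ] H₂) (S : H₂ → H₂)
    (hS : ∀ x y : H₂, ⟪S x - S y, x - y⟫ ≥ ‖S x - S y‖ ^ 2)
    (w p : H₁) (hp : S (A p) = A p) (γ : ℝ) (hγ0 : 0 ≤ γ) :
    ‖(w - γ • (ContinuousLinearMap.adjoint A) (A w - S (A w))) - p‖^2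
      ≤ ‖w - p‖^2 - γ * (2 - γ * ‖A‖^2) * ‖A w - S (A w)‖^2 := by
  set e := A w - S (A w) with he
  set d := w - p with hd
  have h1 : (w - γ • (ContinuousLinearMap.adjoint A) e) - p
      = d - γ • (ContinuousLinearMap.adjoint A) e := by rw [hd]; abel
  rw [h1, @norm_sub_sq_real H₁, real_inner_smul_right, norm_smul, Real.norm_eq_abs,
    abs_of_nonneg hγ0, mul_pow]
  have hadj : ⟪d, (ContinuousLinearMap.adjoint A) e⟫ = ⟪A d, e⟫ := by
    rw [ContinuousLinearMap.adjoint_inner_right]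
  have hAd : A d = A w - A p := by rw [hd, map_sub]
  have hfe : ⟪A d, e⟫ ≥ ‖e‖^2 := by
    have h2 := hS (A w) (A p)
    rw [hp] at h2
    have hse : S (A w) = A w - e := by rw [he]; abel
    rw [hse] at h2
    have hexp : A w - e - A p = (A w - A p) - e := by abel
    rw [hexp, @norm_sub_sq_real H₂, inner_sub_left] at h2
    rw [hAd]
    nlinarith [h2, real_inner_self_eq_norm_sq (A w - A p), real_inner_comm (A w - A p) e]
  have hadjn : ‖(ContinuousLinearMap.adjoint A) e‖^2 ≤ ‖A‖^2 * ‖e‖^2 := by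
    have h3 : ‖(ContinuousLinearMap.adjoint A) e‖ ≤ ‖ContinuousLinearMap.adjoint A‖ * ‖e‖ :=
      (ContinuousLinearMap.adjoint A).le_opNorm e
    have h4 : ‖ContinuousLinearMap.adjoint A‖ = ‖A‖ :=
      (ContinuousLinearMap.adjoint (𝕜 := ℝ) (E := H₁) (F := H₂)).norm_map A
    rw [h4] at h3
    nlinarith [norm_nonneg ((ContinuousLinearMap.adjoint A) e), norm_nonneg e, norm_nonneg A]
  rw [hadj]
  nlinarith [sq_nonneg γ, mul_le_mul_of_nonneg_left hfe hγ0, sq_nonneg ‖e‖]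

/-- The inertial shrinking projection sequence {xₙ} is Cauchy and converges
strongly to z = P_Γ x₀, which solves the split common fixed point problem. -/
theorem inertial_shrinking_projection_strong_convergence
    {H₁ H₂ : Type*} [NormedAddCommGroup H₁] [InnerProductSpace ℝ H₁] [CompleteSpace H₁]
    [NormedAddCommGroup H₂] [InnerProductSpace ℝ H₂] [CompleteSpace H₂]
    (A : H₁ →L[ℝ] H₂) (S : H₂ → H₂)
    (hS : ∀ x y : H₂, ⟪S x - S y, x - y⟫ ≥ ‖S x - S y‖ ^ 2)
    (T : H₁ → H₁)
    (hT : ∀ x : H₁, ∀ p : H₁, T p = p → ‖T x - p‖ ≤ ‖x - p‖)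
    (hTclosed : ∀ (u : ℕ → H₁) (a b : H₁), Filter.Tendsto u Filter.atTop (nhds a) →
      Filter.Tendsto (fun n => T (u n)) Filter.atTop (nhds b) → T a = b)
    (Γ : Set H₁) (hΓ : Γ = {p : H₁ | T p = p ∧ S (A p) = A p}) (hΓne : Γ.Nonempty)
    (γ α θ : ℕ → ℝ) (a b : ℝ) (ha : 0 < a) (hb : b < 1)
    (hγ : ∃ ε > 0, ∀ n, ε ≤ γ n ∧ γ n ≤ 2 / ‖A‖ ^ 2 - ε)
    (hα : ∀ n, α n ∈ Set.Icc a b)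
    (hθ : ∃ M : ℝ, ∀ n, |θ n| ≤ M)
    (x₀ : H₁) (x w z y : ℕ → H₁) (C : ℕ → Set H₁)
    (hw : ∀ n ≥ 1, w n = x n + θ n • (x n - x (n - 1)))
    (hz : ∀ n ≥ 1, z n =
      w n - γ n • (ContinuousLinearMap.adjoint A) (A (w n) - S (A (w n))))
    (hy : ∀ n ≥ 1, y n = α n • z n + (1 - α n) • T (z n))
    (hC1 : C 1 = Set.univ)
    (hC : ∀ n ≥ 1, C (n + 1) =
      {u ∈ C n | ‖y n - u‖ ≤ ‖z n - u‖ ∧ ‖z n - u‖ ≤ ‖w n - u‖})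
    (hx : ∀ n ≥ 1, x (n + 1) ∈ C (n + 1) ∧ ∀ u ∈ C (n + 1), ‖x₀ - x (n + 1)‖ ≤ ‖x₀ - u‖) :
    CauchySeq x ∧
      ∃ zlim : H₁, Filter.Tendsto x Filter.atTop (nhds zlim) ∧
        T zlim = zlim ∧ S (A zlim) = A zlim ∧ zlim ∈ Γ ∧
        ∀ p ∈ Γ, ‖x₀ - zlim‖ ≤ ‖x₀ - p‖ := by
  obtain ⟨ε, hε, hγb⟩ := hγ
  obtain ⟨M, hM⟩ := hθ
  obtain ⟨p₀, hp₀⟩ := hΓne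
  have hp₀' : T p₀ = p₀ ∧ S (A p₀) = A p₀ := by rw [hΓ] at hp₀; exact hp₀
  -- ‖A‖ > 0
  have hA : 0 < ‖A‖ := by
    rcases (norm_nonneg A).lt_or_eq with h | h
    · exact h
    · exfalso
      have h0 := hγb 0
      rw [← h] at h0
      have : (2:ℝ) / 0 ^ 2 - ε = -ε := by norm_num
      rw [this] at h0
      linarith [h0.1, h0.2]
  have hγ0 : ∀ n, 0 ≤ γ n := fun n => le_trans hε.le (hγb n).1
  have hA2 : 0 < ‖A‖ ^ 2 := by positivity
  have hγc : ∀ n, ε * (ε * ‖A‖^2) ≤ γ n * (2 - γ n * ‖A‖^2) := by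
    intro n
    have h2 : (2 / ‖A‖^2 - ε) * ‖A‖^2 = 2 - ε * ‖A‖^2 := by field_simp
    have hub := (hγb n).2
    have hlb := (hγb n).1
    have h3 : ε * ‖A‖^2 ≤ 2 - γ n * ‖A‖^2 := by
      have h4 := mul_le_mul_of_nonneg_right hub hA2.le
      linarith [h2 ▸ h4]
    calc ε * (ε * ‖A‖^2) ≤ γ n * (ε * ‖A‖^2) :=
          mul_le_mul_of_nonneg_right hlb (by positivity)
      _ ≤ γ n * (2 - γ n * ‖A‖^2) := mul_le_mul_of_nonneg_left h3 (hγ0 n)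
  have hcpos : 0 < ε * (ε * ‖A‖^2) := by positivity
  -- the key quadratic inequality
  have hkey : ∀ n ≥ 1, ∀ p : H₁, S (A p) = A p →
      ‖z n - p‖^2 ≤ ‖w n - p‖^2
        - γ n * (2 - γ n * ‖A‖^2) * ‖A (w n) - S (A (w n))‖^2 := by
    intro n hn p hp
    rw [hz n hn]
    exact key_sq' A S hS (w n) p hp (γ n) (hγ0 n)
  have hzw : ∀ n ≥ 1, ∀ p : H₁, S (A p) = A p → ‖z n - p‖ ≤ ‖w n - p‖ := by
    intro n hn p hp
    rw [sq_le_iff_norm']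
    have h1 := hkey n hn p hp
    have h2 : 0 ≤ γ n * (2 - γ n * ‖A‖^2) * ‖A (w n) - S (A (w n))‖^2 :=
      mul_nonneg (le_trans hcpos.le (hγc n)) (sq_nonneg _)
    linarith
  have hyz : ∀ n ≥ 1, ∀ p : H₁, T p = p → ‖y n - p‖ ≤ ‖z n - p‖ := by
    intro n hn p hp
    have hid : y n - p = α n • (z n - p) + (1 - α n) • (T (z n) - p) := by
      rw [hy n hn]; module
    have hα1 : 0 ≤ α n := le_trans ha.le (hα n).1
    have hα2 : 0 ≤ 1 - α n := by linarith [(hα n).2]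
    calc ‖y n - p‖ ≤ ‖α n • (z n - p)‖ + ‖(1 - α n) • (T (z n) - p)‖ := by
          rw [hid]; exact norm_add_le _ _
      _ = α n * ‖z n - p‖ + (1 - α n) * ‖T (z n) - p‖ := by
          rw [norm_smul, norm_smul, Real.norm_eq_abs, Real.norm_eq_abs,
            abs_of_nonneg hα1, abs_of_nonneg hα2]
      _ ≤ ‖z n - p‖ := by nlinarith [hT (z n) p hp]
  -- Γ ⊆ C n
  have hΓC : ∀ n, 1 ≤ n → Γ ⊆ C n := by
    intro n hn
    induction n, hn using Nat.le_induction with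
    | base => rw [hC1]; exact Set.subset_univ _
    | succ n hn ih =>
      intro p hp
      have hp' : T p = p ∧ S (A p) = A p := by rw [hΓ] at hp; exact hp
      rw [hC n hn]
      exact ⟨ih hp, hyz n hn p hp'.1, hzw n hn p hp'.2⟩
  -- C n convex and closed
  have hCC : ∀ n, 1 ≤ n → Convex ℝ (C n) ∧ IsClosed (C n) := by
    intro n hn
    induction n, hn using Nat.le_induction with
    | base => rw [hC1]; exact ⟨convex_univ, isClosed_univ⟩
    | succ n hn ih =>
      rw [hC n hn]
      have hrw : {u ∈ C n | ‖y n - u‖ ≤ ‖z n - u‖ ∧ ‖z n - u‖ ≤ ‖w n - u‖}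
          = C n ∩ ({u | ‖y n - u‖ ≤ ‖z n - u‖} ∩ {u | ‖z n - u‖ ≤ ‖w n - u‖}) := by
        ext u
        simp only [Set.mem_setOf_eq, Set.mem_inter_iff]
      rw [hrw]
      obtain ⟨c1, c2⟩ := halfspace_spec' (y n) (z n)
      obtain ⟨c3, c4⟩ := halfspace_spec' (z n) (w n)
      exact ⟨ih.1.inter (c1.inter c3), ih.2.inter (c2.inter c4)⟩
  -- C is decreasing
  have hCmono : ∀ m n, 1 ≤ n → n ≤ m → C m ⊆ C n := by
    intro m n hn hnm
    induction m, hnm using Nat.le_induction with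
    | base => exact subset_rfl
    | succ m hm ih =>
      refine subset_trans ?_ ih
      rw [hC m (le_trans hn hm)]
      exact fun u hu => hu.1
  have hxmem : ∀ n, 2 ≤ n → x n ∈ C n := by
    intro n hn
    obtain ⟨k, rfl⟩ : ∃ k, n = k + 1 := ⟨n - 1, by omega⟩
    exact (hx k (by omega)).1
  have hxmin : ∀ n, 2 ≤ n → ∀ u ∈ C n, ‖x₀ - x n‖ ≤ ‖x₀ - u‖ := by
    intro n hn
    obtain ⟨k, rfl⟩ : ∃ k, n = k + 1 := ⟨n - 1, by omega⟩
    exact (hx k (by omega)).2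
  have hvari : ∀ n, 2 ≤ n → ∀ u ∈ C n, ⟪x₀ - x n, u - x n⟫ ≤ 0 := by
    intro n hn
    exact proj_char' (hCC n (by omega)).1 (hxmem n hn) (hxmin n hn)
  have hkey2 : ∀ m n, 2 ≤ n → n ≤ m →
      ‖x₀ - x n‖^2 + ‖x m - x n‖^2 ≤ ‖x₀ - x m‖^2 := by
    intro m n hn hnm
    have hxmC : x m ∈ C n := hCmono m n (by omega) hnm (hxmem m (by omega))
    have h := hvari n hn (x m) hxmC
    have hrw : x₀ - x m = (x₀ - x n) - (x m - x n) := by abel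
    have he : ‖x₀ - x m‖^2 = ‖x₀ - x n‖^2 - 2 * ⟪x₀ - x n, x m - x n⟫ + ‖x m - x n‖^2 := by
      rw [hrw]; exact norm_sub_sq_real _ _
    linarith
  have hdbound : ∀ n, 2 ≤ n → ‖x₀ - x n‖ ≤ ‖x₀ - p₀‖ :=
    fun n hn => hxmin n hn p₀ (hΓC n (by omega) hp₀)
  have hdmono : ∀ m n, 2 ≤ n → n ≤ m → ‖x₀ - x n‖ ≤ ‖x₀ - x m‖ := by
    intro m n hn hnm
    rw [sq_le_iff_norm']
    nlinarith [hkey2 m n hn hnm, sq_nonneg ‖x m - x n‖]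
  -- the real sequence of distances converges
  set s : ℕ → ℝ := fun k => ‖x₀ - x (k + 2)‖ with hs
  have hs_mono : Monotone s := fun i j hij => hdmono (j + 2) (i + 2) (by omega) (by omega)
  have hs_bdd : BddAbove (Set.range s) := by
    refine ⟨‖x₀ - p₀‖, ?_⟩
    rintro r ⟨k, rfl⟩
    exact hdbound (k + 2) (by omega)
  have hs_conv : Tendsto s atTop (𝓝 (⨆ k, s k)) := tendsto_atTop_ciSup hs_mono hs_bdd
  have hs2_cauchy : CauchySeq (fun k => (s k)^2) := (hs_conv.pow 2).cauchySeq
  have hseq : ∀ n, 2 ≤ n → ‖x₀ - x n‖ = s (n - 2) := by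
    intro n hn
    have h : n - 2 + 2 = n := by omega
    simp only [hs, h]
  -- x is Cauchy
  have hcauchy : CauchySeq x := by
    refine Metric.cauchySeq_iff.2 fun δ hδ => ?_
    obtain ⟨N₀, hN₀⟩ := Metric.cauchySeq_iff.1 hs2_cauchy (δ^2) (by positivity)
    refine ⟨N₀ + 2, fun m hm n hn => ?_⟩
    have key3 : ∀ m n, N₀ + 2 ≤ m → N₀ + 2 ≤ n → n ≤ m → dist (x m) (x n) < δ := by
      intro m n hm hn hnm
      rw [dist_eq_norm]
      have h2n : 2 ≤ n := by omega
      have hmn2 := hkey2 m n h2n hnm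
      have hdist := hN₀ (m - 2) (by omega) (n - 2) (by omega)
      rw [Real.dist_eq, abs_lt] at hdist
      rw [hseq m (by omega), hseq n h2n] at hmn2
      have hlt : ‖x m - x n‖^2 < δ^2 := by linarith [hdist.2]
      nlinarith [norm_nonneg (x m - x n)]
    rcases le_total n m with h | h
    · exact key3 m n hm hn h
    · rw [dist_comm]; exact key3 n m hn hm h
  obtain ⟨zlim, hzlim⟩ := cauchySeq_tendsto_of_complete hcauchy
  -- limits of the auxiliary sequences
  have hxsucc : Tendsto (fun n => x (n + 1)) atTop (𝓝 zlim) :=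
    hzlim.comp (tendsto_add_atTop_nat 1)
  have hxpred : Tendsto (fun n => x (n - 1)) atTop (𝓝 zlim) :=
    hzlim.comp (tendsto_sub_atTop_nat 1)
  have hdiff : Tendsto (fun n => x n - x (n - 1)) atTop (𝓝 0) := by
    simpa using hzlim.sub hxpred
  have hθ0 : Tendsto (fun n => θ n • (x n - x (n - 1))) atTop (𝓝 0) := by
    have hgl : Tendsto (fun n => M * ‖x n - x (n - 1)‖) atTop (𝓝 0) := by
      simpa using hdiff.norm.const_mul M
    refine squeeze_zero_norm (fun n => ?_) hgl
    rw [norm_smul, Real.norm_eq_abs]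
    exact mul_le_mul_of_nonneg_right (hM n) (norm_nonneg _)
  have hw_lim : Tendsto w atTop (𝓝 zlim) := by
    have hev : ∀ᶠ n in atTop, x n + θ n • (x n - x (n - 1)) = w n :=
      Filter.eventually_atTop.2 ⟨1, fun n hn => (hw n hn).symm⟩
    exact Tendsto.congr' hev (by simpa using hzlim.add hθ0)
  have hwx : Tendsto (fun n => ‖w n - x (n + 1)‖) atTop (𝓝 0) := by
    simpa using (hw_lim.sub hxsucc).norm
  have hmemineq : ∀ n ≥ 1, ‖y n - x (n + 1)‖ ≤ ‖z n - x (n + 1)‖ ∧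
      ‖z n - x (n + 1)‖ ≤ ‖w n - x (n + 1)‖ := by
    intro n hn
    have h := (hx n hn).1
    rw [hC n hn] at h
    exact h.2
  have hz_lim : Tendsto z atTop (𝓝 zlim) := by
    have h1 : Tendsto (fun n => z n - x (n + 1)) atTop (𝓝 0) := by
      refine squeeze_zero_norm' ?_ hwx
      exact Filter.eventually_atTop.2 ⟨1, fun n hn => (hmemineq n hn).2⟩
    simpa using h1.add hxsucc
  have hy_lim : Tendsto y atTop (𝓝 zlim) := by
    have h1 : Tendsto (fun n => y n - x (n + 1)) atTop (𝓝 0) := by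
      refine squeeze_zero_norm' ?_ hwx
      exact Filter.eventually_atTop.2
        ⟨1, fun n hn => le_trans (hmemineq n hn).1 (hmemineq n hn).2⟩
    simpa using h1.add hxsucc
  -- A w n - S(A w n) → 0
  have he_sq : Tendsto (fun n => ‖A (w n) - S (A (w n))‖^2) atTop (𝓝 0) := by
    have hg : Tendsto (fun n => (‖w n - p₀‖^2 - ‖z n - p₀‖^2) / (ε * (ε * ‖A‖^2)))
        atTop (𝓝 0) := by
      have h1 : Tendsto (fun n => ‖w n - p₀‖^2 - ‖z n - p₀‖^2) atTop (𝓝 0) := by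
        have h2 := ((hw_lim.sub (tendsto_const_nhds (α := ℕ) (x := p₀))).norm.pow 2).sub
          ((hz_lim.sub (tendsto_const_nhds (α := ℕ) (x := p₀))).norm.pow 2)
        simpa using h2
      simpa using h1.div_const (ε * (ε * ‖A‖^2))
    refine squeeze_zero' (Filter.eventually_atTop.2 ⟨1, fun n _ => sq_nonneg _⟩)
      (Filter.eventually_atTop.2 ⟨1, fun n hn => ?_⟩) hg
    rw [le_div_iff₀ hcpos]
    have h1 := hkey n hn p₀ hp₀'.2
    have h2 := mul_le_mul_of_nonneg_right (hγc n) (sq_nonneg ‖A (w n) - S (A (w n))‖)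
    nlinarith
  have he_lim : Tendsto (fun n => A (w n) - S (A (w n))) atTop (𝓝 0) := by
    rw [tendsto_zero_iff_norm_tendsto_zero]
    have h1 : Tendsto (fun n => Real.sqrt (‖A (w n) - S (A (w n))‖^2)) atTop (𝓝 0) := by
      simpa [Function.comp_def] using (Real.continuous_sqrt.tendsto 0).comp he_sq
    refine h1.congr fun n => ?_
    exact Real.sqrt_sq (norm_nonneg _)
  -- S(A zlim) = A zlim
  have hAw : Tendsto (fun n => A (w n)) atTop (𝓝 (A zlim)) :=
    (A.continuous.tendsto zlim).comp hw_lim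
  have hSAw1 : Tendsto (fun n => S (A (w n))) atTop (𝓝 (A zlim)) := by
    simpa using hAw.sub he_lim
  have hSnonexp : ∀ u v : H₂, ‖S u - S v‖ ≤ ‖u - v‖ := by
    intro u v
    rcases (norm_nonneg (S u - S v)).lt_or_eq with h | h
    · have h1 := hS u v
      have h2 := real_inner_le_norm (S u - S v) (u - v)
      nlinarith
    · rw [← h]; exact norm_nonneg _
  have hSAw2 : Tendsto (fun n => S (A (w n))) atTop (𝓝 (S (A zlim))) := by
    have h0 : Tendsto (fun n => S (A (w n)) - S (A zlim)) atTop (𝓝 0) := by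
      refine squeeze_zero_norm (fun n => hSnonexp _ _) ?_
      simpa using (hAw.sub (tendsto_const_nhds (α := ℕ) (x := A zlim))).norm
    simpa using h0.add (tendsto_const_nhds (α := ℕ) (x := S (A zlim)))
  have hSAz : S (A zlim) = A zlim := tendsto_nhds_unique hSAw2 hSAw1
  -- T zlim = zlim
  have h1b : (0:ℝ) < 1 - b := by linarith
  have hTzz : Tendsto (fun n => T (z n) - z n) atTop (𝓝 0) := by
    have hgl : Tendsto (fun n => (1 - b)⁻¹ * ‖y n - z n‖) atTop (𝓝 0) := by
      simpa using ((hy_lim.sub hz_lim).norm.const_mul (1 - b)⁻¹)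
    refine squeeze_zero_norm' (Filter.eventually_atTop.2 ⟨1, fun n hn => ?_⟩) hgl
    · have hid : y n - z n = (1 - α n) • (T (z n) - z n) := by
        rw [hy n hn]; module
      have hα2 : 0 ≤ 1 - α n := by linarith [(hα n).2]
      have hE : ‖y n - z n‖ = (1 - α n) * ‖T (z n) - z n‖ := by
        rw [hid, norm_smul, Real.norm_eq_abs, abs_of_nonneg hα2]
      rw [hE, le_inv_mul_iff₀ h1b]
      have : 1 - b ≤ 1 - α n := by linarith [(hα n).2]
      exact mul_le_mul_of_nonneg_right this (norm_nonneg _)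
  have hTz : Tendsto (fun n => T (z n)) atTop (𝓝 zlim) := by
    simpa using hTzz.add hz_lim
  have hTzlim : T zlim = zlim := hTclosed z zlim zlim hz_lim hTz
  refine ⟨hcauchy, zlim, hzlim, hTzlim, hSAz, ?_, ?_⟩
  · rw [hΓ]; exact ⟨hTzlim, hSAz⟩
  · intro p hp
    have hev : ∀ᶠ n in atTop, ‖x₀ - x (n + 1)‖ ≤ ‖x₀ - p‖ :=
      Filter.eventually_atTop.2 ⟨1, fun n hn => (hx n hn).2 p (hΓC (n + 1) (by omega) hp)⟩
    exact le_of_tendsto ((tendsto_const_nhds.sub hxsucc).norm) hev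
end
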